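/- arXiv:2408.01378 — 5 statements merged into one kernel-verified Lean document; each statement's English description precedes it below -/
import Mathlib

section
/- Let 𝒜 be a cocomplete abelian category, ℬ an abelian category, F : 𝒜 ⟶ ℬ an exact functor admitting a fully faithful right adjoint G : ℬ ⟶ 𝒜, and let μ : 1_𝒜 ⟶ G∘F be the unit of the adjunction. Then 𝒯 := Ker(F) is a hereditary torsion class in 𝒜 (i.e. (𝒯, 𝒯^{⊥₀}) is a torsion pair and 𝒯 is closed under subobjects), and for each object A of 𝒜 the associated torsion sequence is 0 ⟶ Ker(μ_A) ⟶ A ⟶ Im(μ_A) ⟶ 0; that is, Ker(μ_A) ∈ 𝒯 and Im(μ_A) ∈ 𝒯^{⊥₀}. -/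
open CategoryTheory CategoryTheory.Limits

universe v u u'

/-- let `𝒜` be a cocomplete abelian category, `ℬ` an abelian category,
`F : 𝒜 ⥤ ℬ` an exact functor with a fully faithful right adjoint `G`, and `μ` the unit of
the adjunction.  Set `𝒯 := Ker(F) = {X | F X ≅ 0}` and
`𝒯^{⊥₀} := {Y | Hom(T, Y) = 0 for all T ∈ 𝒯}`.  Then `(𝒯, 𝒯^{⊥₀})` is a torsion pair
(conditions t1 and t2), `𝒯` is closed under subobjects (it is a hereditary torsion class),
and for each object `A₀` the torsion sequence is
`0 ⟶ Ker(μ_{A₀}) ⟶ A₀ ⟶ Im(μ_{A₀}) ⟶ 0`, that is, `Ker(μ_{A₀}) ∈ 𝒯` and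
`Im(μ_{A₀}) ∈ 𝒯^{⊥₀}`. -/
theorem kernel_of_serre_quotient_is_hereditary_torsion_class
    {A : Type u} {B : Type u'} [Category.{v} A] [Category.{v} B]
    [Abelian A] [Abelian B] [HasColimits A]
    (F : A ⥤ B) (G : B ⥤ A) (adj : F ⊣ G)
    [PreservesFiniteLimits F] [PreservesFiniteColimits F]
    [G.Full] [G.Faithful] :
    -- (t1): no nonzero maps from 𝒯 to 𝒯^{⊥₀}
    (∀ (T Y : A), IsZero (F.obj T) →
        (∀ (T' : A), IsZero (F.obj T') → ∀ g : T' ⟶ Y, g = 0) →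
        ∀ f : T ⟶ Y, f = 0) ∧
    -- (t2): every object fits in a short exact sequence with torsion kernel and
    -- torsion-free cokernel
    (∀ A₀ : A, ∃ (T Fo : A) (_ : IsZero (F.obj T))
        (_ : ∀ (T' : A), IsZero (F.obj T') → ∀ g : T' ⟶ Fo, g = 0)
        (i : T ⟶ A₀) (p : A₀ ⟶ Fo) (w : i ≫ p = 0),
        (ShortComplex.mk i p w).ShortExact) ∧
    -- 𝒯 is hereditary: closed under subobjects
    (∀ (X S : A) (i : S ⟶ X), Mono i → IsZero (F.obj X) → IsZero (F.obj S)) ∧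
    -- the torsion sequence of `A₀` is `0 ⟶ Ker(μ_{A₀}) ⟶ A₀ ⟶ Im(μ_{A₀}) ⟶ 0`:
    (∀ A₀ : A,
      IsZero (F.obj (kernel (adj.unit.app A₀))) ∧
      (∀ (T : A), IsZero (F.obj T) →
        ∀ f : T ⟶ Abelian.image (adj.unit.app A₀), f = 0)) := by
  -- maps from a torsion object to anything in the image of `G` are zero
  have hGzero : ∀ (T : A) (X : B), IsZero (F.obj T) → ∀ h : T ⟶ G.obj X, h = 0 := by
    intro T X hT h
    have : (adj.homEquiv T X).symm h = (adj.homEquiv T X).symm 0 := hT.eq_of_src _ _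
    exact (adj.homEquiv T X).symm.injective this
  -- maps from torsion objects to `Im(μ_{A₀})` are zero
  have himg : ∀ (A₀ T : A), IsZero (F.obj T) →
      ∀ f : T ⟶ Abelian.image (adj.unit.app A₀), f = 0 := by
    intro A₀ T hT f
    have : f ≫ Abelian.image.ι (adj.unit.app A₀) = 0 := hGzero T _ hT _
    rwa [← cancel_mono (Abelian.image.ι (adj.unit.app A₀)), zero_comp]
  -- `F` kills the kernel of the unit
  have hker : ∀ A₀ : A, IsZero (F.obj (kernel (adj.unit.app A₀))) := by
    intro A₀
    have htri := adj.left_triangle_components A₀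
    have : IsIso (F.map (adj.unit.app A₀)) := by
      refine ⟨adj.counit.app (F.obj A₀), htri, ?_⟩
      rw [← cancel_mono (adj.counit.app (F.obj A₀))]
      simp [htri]
    exact IsZero.of_iso (isZero_zero B)
      (PreservesKernel.iso F (adj.unit.app A₀) ≪≫ kernel.ofMono (F.map (adj.unit.app A₀)))
  refine ⟨?_, ?_, ?_, fun A₀ => ⟨hker A₀, himg A₀⟩⟩
  · -- (t1)
    intro T Y hT hY f
    exact hY T hT f
  · -- (t2)
    intro A₀
    set μ := adj.unit.app A₀
    have w : kernel.ι μ ≫ Abelian.factorThruImage μ = 0 := by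
      rw [← cancel_mono (Abelian.image.ι μ), Category.assoc, Abelian.image.fac,
        kernel.condition, zero_comp]
    refine ⟨kernel μ, Abelian.image μ, hker A₀, himg A₀, kernel.ι μ,
      Abelian.factorThruImage μ, w, ?_⟩
    have hexact : (ShortComplex.mk (kernel.ι μ) (Abelian.factorThruImage μ) w).Exact := by
      apply ShortComplex.exact_of_f_is_kernel
      refine KernelFork.IsLimit.ofι _ _ (fun g hg => kernel.lift μ g ?_) ?_ ?_
      · show g ≫ μ = 0
        calc g ≫ μ = (g ≫ Abelian.factorThruImage μ) ≫ Abelian.image.ι μ := by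
              rw [Category.assoc, Abelian.image.fac]
          _ = 0 := by rw [show g ≫ Abelian.factorThruImage μ = 0 from hg, zero_comp]
      · intro W g hg
        simp
      · intro W g hg m hm
        rw [← cancel_mono (kernel.ι μ), hm, kernel.lift_ι]
    exact { exact := hexact }
  · -- hereditary
    intro X S i hi hX
    haveI := hi
    haveI : Mono (F.map i) := inferInstance
    have hz : F.map i = 0 := hX.eq_of_tgt _ _
    rw [IsZero.iff_id_eq_zero]
    rw [← cancel_mono (F.map i), hz, comp_zero, zero_comp]
end

section
/- Let 𝒜 be a cocomplete abelian category, ℬ an abelian category, F : 𝒜 ⟶ ℬ an exact functor admitting a fully faithful right adjoint G : ℬ ⟶ 𝒜, and set 𝒯 := Ker(F). If 𝒯₀ ⊆ 𝒯 is any subcategory such that 𝒯 = Gen(𝒯₀) (every object of 𝒯 is an epimorphic image of a coproduct of objects of 𝒯₀), then the essential image of G equals 𝒯₀^{⊥_{0,1}}, the full subcategory of objects Y of 𝒜 such that Hom_𝒜(T,Y) = 0 and Ext¹_𝒜(T,Y) = 0 for all T ∈ 𝒯₀. -/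
/-!
Since `G` is fully faithful, `Y` lies in the essential image of `G` iff the unit
`η : Y ⟶ GFY` is an isomorphism. Because `F` is exact and `Fη` is invertible, the kernel and
cokernel of `η` lie in `Ker F`. Every object of `Ker F` is a quotient of a coproduct of objects
of `𝒯₀`, so `Hom(𝒯₀, Y) = 0` kills all maps from `Ker F` to `Y`, making `η` mono; lifting
componentwise along the extension `0 ⟶ Y ⟶ GFY ⟶ coker η ⟶ 0` then shows it splits. The
splitting is a map from `coker η ∈ Ker F` into `GFY`, hence zero, so `coker η = 0`.
Conversely, if `η` is invertible, a short exact sequence `0 ⟶ Y ⟶ E ⟶ T ⟶ 0` with `FT = 0`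
has `F` of its first map invertible, and `η` transports the inverse back to a retraction.
-/

open CategoryTheory CategoryTheory.Limits

universe v u u'

/-- `Ext¹_𝒜(T, Y) = 0`, expressed by the (equivalent) property that every short exact
sequence `0 ⟶ Y ⟶ E ⟶ T ⟶ 0` splits. -/
def Ext1Vanishes {A : Type u} [Category.{v} A] [Abelian A] (T Y : A) : Prop :=
  ∀ (E : A) (i : Y ⟶ E) (p : E ⟶ T) (w : i ≫ p = 0),
    (ShortComplex.mk i p w).ShortExact → ∃ s : T ⟶ E, s ≫ p = 𝟙 T

namespace CategoryTheory.Adjunction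

variable {C : Type*} {D : Type*} [Category C] [Category D] {F : C ⥤ D} {G : D ⥤ C}

lemma hom_eq_zero_of_isZero_obj [HasZeroMorphisms C] (adj : F ⊣ G)
    {X Y : C} (hX : IsZero (F.obj X)) [IsIso (adj.unit.app Y)] (f : X ⟶ Y) : f = 0 := by
  have : f ≫ adj.unit.app Y = 0 :=
    (adj.homEquiv X (F.obj Y)).symm.injective (hX.eq_of_src _ _)
  simpa using this =≫ inv (adj.unit.app Y)

lemma isSplitMono_of_isIso_map (adj : F ⊣ G) {Y E : C} (i : Y ⟶ E)
    [IsIso (adj.unit.app Y)] [IsIso (F.map i)] : IsSplitMono i :=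
  .mk' ⟨adj.unit.app E ≫ G.map (inv (F.map i)) ≫ inv (adj.unit.app Y), by
    simp [← adj.unit_naturality_assoc]⟩

end CategoryTheory.Adjunction

lemma isZero_obj_sigma {A : Type*} {B : Type*} [Category A] [Category B] [HasZeroMorphisms B]
    (F : A ⥤ B) {ι : Type*} (t : ι → A) [HasCoproduct t]
    [PreservesColimit (Discrete.functor t) F]
    (ht : ∀ k, IsZero (F.obj (t k))) : IsZero (F.obj (∐ t)) := by
  rw [IsZero.iff_id_eq_zero]
  exact (isColimitOfPreserves F (colimit.isColimit _)).hom_ext fun k => (ht k.as).eq_of_src _ _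

section Abelian

variable {A : Type u} [Category.{v} A] [Abelian A]

lemma hom_eq_zero_of_epi_sigma {ι : Type*} {t : ι → A} [HasCoproduct t] {X Y : A}
    (q : ∐ t ⟶ X) [Epi q] (ht : ∀ k (f : t k ⟶ Y), f = 0) (f : X ⟶ Y) : f = 0 :=
  (cancel_epi q).1 <| Sigma.hom_ext _ _ fun k => by simpa using ht k (Sigma.ι t k ≫ q ≫ f)

/-- Pull the extension back along `f`; the pulled-back extension of `T'` by `Y` splits. -/
lemma exists_lift_of_ext1Vanishes {Y E T T' : A} (i : Y ⟶ E) (p : E ⟶ T) (w : i ≫ p = 0)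
    (hse : (ShortComplex.mk i p w).ShortExact) (hext : Ext1Vanishes T' Y) (f : T' ⟶ T) :
    ∃ u : T' ⟶ E, u ≫ p = f := by
  have : Epi p := hse.epi_g
  have : Mono i := hse.mono_f
  let j : Y ⟶ pullback p f := pullback.lift i 0 (by simp [w])
  have hja : j ≫ pullback.fst p f = i := pullback.lift_fst _ _ _
  have hjb : j ≫ pullback.snd p f = 0 := pullback.lift_snd _ _ _
  have : Mono j := mono_of_mono_fac hja
  have hker : IsLimit (KernelFork.ofι j hjb) := by
    refine KernelFork.IsLimit.ofι' j hjb fun {W} z hz => ?_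
    obtain ⟨l, hl⟩ := KernelFork.IsLimit.lift' hse.exact.fIsKernel (z ≫ pullback.fst p f)
      (by simp [pullback.condition, reassoc_of% hz])
    exact ⟨l, pullback.hom_ext (by simpa [hja] using hl) (by simp [hjb, hz])⟩
  obtain ⟨s, hs⟩ := hext _ j _ hjb
    ⟨ShortComplex.exact_of_f_is_kernel _ hker⟩
  exact ⟨s ≫ pullback.fst p f, by simp [pullback.condition, reassoc_of% hs]⟩

lemma ext1Vanishes_of_epi_sigma {ι : Type*} {t : ι → A} [HasCoproduct t] {X Y : A}
    (q : ∐ t ⟶ X) [Epi q] (ht : ∀ k, Ext1Vanishes (t k) Y)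
    (hker : ∀ f : kernel q ⟶ Y, f = 0) : Ext1Vanishes X Y := by
  intro E i p w hse
  have : Mono i := hse.mono_f
  choose u hu using fun k => exists_lift_of_ext1Vanishes i p w hse (ht k) (Sigma.ι t k ≫ q)
  have hUp : Sigma.desc u ≫ p = q := Sigma.hom_ext _ _ fun k => by simp [hu]
  have hU : kernel.ι q ≫ Sigma.desc u = 0 := by
    obtain ⟨v, hv⟩ :=
      KernelFork.IsLimit.lift' hse.exact.fIsKernel (kernel.ι q ≫ Sigma.desc u) (by simp [hUp])
    rw [← hv, hker v, zero_comp]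
  refine ⟨Abelian.epiDesc q _ hU, (cancel_epi q).1 ?_⟩
  rw [← Category.assoc, Abelian.comp_epiDesc, hUp, Category.comp_id]

lemma ext1Vanishes_of_isIso_unit_app {B : Type*} [Category B] [Abelian B] {F : A ⥤ B}
    {G : B ⥤ A} [PreservesFiniteLimits F] [PreservesFiniteColimits F] (adj : F ⊣ G) {T Y : A}
    (hT : IsZero (F.obj T)) [IsIso (adj.unit.app Y)] : Ext1Vanishes T Y := by
  intro E i p w hse
  have hFse := hse.map_of_exact F
  have : Epi (F.map i) := hFse.exact.epi_f (hT.eq_of_tgt _ _)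
  have : Mono (F.map i) := hFse.mono_f
  have : IsIso (F.map i) := isIso_of_mono_of_epi _
  have := adj.isSplitMono_of_isIso_map i
  exact ⟨_, (ShortComplex.Splitting.ofExactOfRetraction _ hse.exact (retraction i)
    (IsSplitMono.id i) hse.epi_g).s_g⟩

variable {B : Type*} [Category B] [Abelian B] (F : A ⥤ B)

lemma isZero_obj_kernel_of_isIso_map [PreservesFiniteLimits F] {X Y : A} (f : X ⟶ Y)
    [IsIso (F.map f)] : IsZero (F.obj (kernel f)) :=
  (isZero_kernel_of_mono (F.map f)).of_iso (PreservesKernel.iso F f)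

lemma isZero_obj_cokernel_of_isIso_map [PreservesFiniteColimits F] {X Y : A} (f : X ⟶ Y)
    [IsIso (F.map f)] : IsZero (F.obj (cokernel f)) :=
  (isZero_cokernel_of_epi (F.map f)).of_iso (PreservesCokernel.iso F f)

lemma isZero_obj_kernel_of_isZero_obj [PreservesFiniteLimits F] {X Y : A} (f : X ⟶ Y)
    (hX : IsZero (F.obj X)) : IsZero (F.obj (kernel f)) :=
  hX.of_mono (F.map (kernel.ι f))

end Abelian

/-- let `𝒜` be a cocomplete abelian category, `ℬ` an abelian category,
`F : 𝒜 ⥤ ℬ` an exact functor with a fully faithful right adjoint `G`, and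
`𝒯 := Ker(F)`.  If `𝒯₀ ⊆ 𝒯` is a subcategory with `𝒯 = Gen(𝒯₀)` (every object of `𝒯`
is an epimorphic image of a coproduct of objects of `𝒯₀`), then the essential image of
`G` is exactly `𝒯₀^{⊥_{0,1}}`, the class of objects `Y` with
`Hom(T, Y) = 0 = Ext¹(T, Y)` for all `T ∈ 𝒯₀`. -/
theorem essImage_eq_perp01_of_generators_of_kernel
    {A : Type u} {B : Type u'} [Category.{v} A] [Category.{v} B]
    [Abelian A] [Abelian B] [HasColimits A]
    (F : A ⥤ B) (G : B ⥤ A) (adj : F ⊣ G)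
    [PreservesFiniteLimits F] [PreservesFiniteColimits F]
    [G.Full] [G.Faithful]
    (T₀ : Set A) (hT₀ : ∀ T ∈ T₀, IsZero (F.obj T))
    (hgen : ∀ X : A, IsZero (F.obj X) →
      ∃ (ι : Type v) (t : ι → A), (∀ k : ι, t k ∈ T₀) ∧ ∃ p : (∐ t) ⟶ X, Epi p) :
    ∀ Y : A, (∃ B₀ : B, Nonempty (G.obj B₀ ≅ Y)) ↔
      (∀ T ∈ T₀, (∀ f : T ⟶ Y, f = 0) ∧ Ext1Vanishes T Y) := by
  have : PreservesColimitsOfSize.{v, v} F := adj.leftAdjoint_preservesColimits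
  intro Y
  change G.essImage Y ↔ _
  rw [← adj.isIso_unit_app_iff_mem_essImage]
  constructor
  · intro _ T hT
    exact ⟨adj.hom_eq_zero_of_isZero_obj (hT₀ T hT),
      ext1Vanishes_of_isIso_unit_app adj (hT₀ T hT)⟩
  · intro hY
    have hKer (X : A) (hX : IsZero (F.obj X)) (f : X ⟶ Y) : f = 0 := by
      obtain ⟨ι, t, ht, q, _⟩ := hgen X hX
      exact hom_eq_zero_of_epi_sigma q (fun k => (hY _ (ht k)).1) f
    let η := adj.unit.app Y
    have : Mono η :=
      Abelian.mono_of_kernel_ι_eq_zero _ (hKer _ (isZero_obj_kernel_of_isIso_map F η) _)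
    have hC : IsZero (F.obj (cokernel η)) := isZero_obj_cokernel_of_isIso_map F η
    have hext : Ext1Vanishes (cokernel η) Y := by
      obtain ⟨ι, t, ht, q, _⟩ := hgen _ hC
      have hsum : IsZero (F.obj (∐ t)) := isZero_obj_sigma F t fun k => hT₀ _ (ht k)
      exact ext1Vanishes_of_epi_sigma q (fun k => (hY _ (ht k)).2)
        (hKer _ (isZero_obj_kernel_of_isZero_obj F q hsum))
    obtain ⟨s, hs⟩ := hext _ _ _ _ ⟨ShortComplex.cokernelSequence_exact η⟩
    have hs0 : s = 0 := adj.hom_eq_zero_of_isZero_obj (Y := G.obj (F.obj Y)) hC s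
    have : Epi η := Abelian.epi_of_cokernel_π_eq_zero _ <| by
      simpa [hs0] using (cokernel.π η ≫= hs).symm
    exact isIso_of_mono_of_epi η
end

section
/- Let 𝒜 be a cocomplete abelian category, ℬ an abelian category, F : 𝒜 ⟶ ℬ an exact functor admitting a fully faithful right adjoint G : ℬ ⟶ 𝒜, and set 𝒯 := Ker(F). If 𝒳 is a set of generators of 𝒜 and 𝒯₀ is the class of objects of 𝒯 that are epimorphic images of objects of 𝒳, then 𝒯 = Gen(𝒯₀), i.e. every object of 𝒯 is an epimorphic image of a coproduct of objects of 𝒯₀. -/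
open CategoryTheory CategoryTheory.Limits

universe v u u'

/-- let `𝒜` be a cocomplete abelian category, `ℬ` an abelian category,
`F : 𝒜 ⥤ ℬ` an exact functor with a fully faithful right adjoint `G`, and
`𝒯 := Ker(F)`.  If `𝒳` is a set of generators of `𝒜` and `𝒯₀` is the class of objects
of `𝒯` that are epimorphic images of objects of `𝒳`, then `𝒯 = Gen(𝒯₀)`: every object
of `𝒯` is an epimorphic image of a coproduct of objects of `𝒯₀`. -/
theorem kernel_of_serre_quotient_is_generated_by_quotients_of_generators
    {A : Type u} {B : Type u'} [Category.{v} A] [Category.{v} B]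
    [Abelian A] [Abelian B] [HasColimits A]
    (F : A ⥤ B) (G : B ⥤ A) (adj : F ⊣ G)
    [PreservesFiniteLimits F] [PreservesFiniteColimits F]
    [G.Full] [G.Faithful]
    (κ : Type v) (Gen : κ → A)
    (hsep : ∀ ⦃X X' : A⦄ (h : X ⟶ X'), h ≠ 0 → ∃ (k : κ) (g : Gen k ⟶ X), g ≫ h ≠ 0) :
    ∀ T : A, IsZero (F.obj T) →
      ∃ (ι : Type v) (t : ι → A),
        (∀ k : ι, IsZero (F.obj (t k)) ∧ ∃ (k' : κ) (q : Gen k' ⟶ t k), Epi q) ∧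
        ∃ p : (∐ t) ⟶ T, Epi p := by
  intro T hT
  refine ⟨Σ k : κ, (Gen k ⟶ T), fun i => Limits.image i.2, ?_, ?_⟩
  · rintro ⟨k, g⟩
    constructor
    · -- F (image g) is zero since it maps monomorphically into F T = 0
      have : Mono (F.map (Limits.image.ι g)) := inferInstance
      exact (IsZero.iff_id_eq_zero _).2 <| by
        rw [← cancel_mono (F.map (Limits.image.ι g)), Category.id_comp, zero_comp,
          hT.eq_of_tgt (F.map (Limits.image.ι g)) 0]
    · exact ⟨k, factorThruImage g, inferInstance⟩
  · refine ⟨Sigma.desc (fun i => Limits.image.ι i.2), ?_⟩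
    rw [Preadditive.epi_iff_cancel_zero]
    intro Z h hh
    by_contra hne
    obtain ⟨k, g, hg⟩ := hsep h hne
    apply hg
    have : Limits.image.ι g ≫ h = 0 := by
      have := Sigma.ι_desc (f := fun i : (Σ k : κ, (Gen k ⟶ T)) => Limits.image i.2)
        (p := fun i => Limits.image.ι i.2) ⟨k, g⟩
      rw [← this, Category.assoc, hh, comp_zero]
    rw [← Limits.image.fac g, Category.assoc, this, comp_zero]
end

section
/- Let 𝒜 be an additive category with all set-indexed coproducts, let [(X_i)_{i∈I},(u_{ij}:X_i⟶X_j)_{i≤j}] and [(Y_λ)_{λ∈Λ},(v_{λμ}:Y_λ⟶Y_μ)_{λ≤μ}] be two direct systems in 𝒜 admitting colimits, with canonical maps u_j : X_j ⟶ colim X_i and v_μ : Y_μ ⟶ colim Y_λ, and let f : colim X_i ⟶ colim Y_λ be a morphism such that: (†) for each j ∈ I there is μ ∈ Λ such that f ∘ u_j factors through v_μ; and (††) v_μ is a monomorphism for all μ ∈ Λ. Then there exist a directed set Ω and a direct system of morphisms (g_ω : X_ω ⟶ Y_ω)_{ω∈Ω} (i.e. a direct system in the arrow category of 𝒜) such that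 (a) each X_ω belongs to {X_i : i ∈ I} and each Y_ω belongs to {Y_λ : λ ∈ Λ}, and (b) the colimit of this system of morphisms exists and colim g_ω : colim X_ω ⟶ colim Y_ω is isomorphic to f in the arrow category. Moreover, if α is a regular cardinal such that I and Λ are α-directed, then Ω can be chosen α-directed. -/
open CategoryTheory CategoryTheory.Limits

universe v u

/-- A preorder `I` is `α`-directed when every subset of cardinality `< α` has an upper bound. -/
def IsCardinalDirected (α : Cardinal.{v}) (I : Type v) [Preorder I] : Prop :=
  ∀ S : Set I, Cardinal.mk S < α → ∃ b : I, ∀ s ∈ S, s ≤ b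

/-- The natural transformation `Arrow.leftFunc ⟶ Arrow.rightFunc` whose component at an
arrow `a` is the morphism `a.hom` itself. -/
def arrowHomNatTrans (C : Type u) [Category.{v} C] :
    (Arrow.leftFunc : Arrow C ⥤ C) ⟶ Arrow.rightFunc where
  app a := a.hom
  naturality _ _ f := Arrow.w f

/-- An `α`-directed system of morphisms in `C`: an `α`-directed preorder `Ω` together with
a functor `Ω ⥤ Arrow C`. -/
structure CardinalDirectedArrowSystem (α : Cardinal.{v}) (C : Type u) [Category.{v} C] where
  /-- the index set -/
  Ω : Type v
  /-- the order on the index set -/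
  [pre : Preorder Ω]
  /-- the index set is `α`-directed -/
  directed : IsCardinalDirected α Ω
  /-- the direct system of morphisms, as a functor to the arrow category -/
  D : Ω ⥤ Arrow C

attribute [instance] CardinalDirectedArrowSystem.pre

/-! Index the new system by all "local representatives" `g : X_i ⟶ Y_λ` of `f`, ordered by
compatibility with the transition maps. Projecting a representative to its source and its
target gives cofinal monotone maps to `I` and `Λ`, so the colimits of the sources and targets
are still `colim X` and `colim Y`, and the induced map between them is `f`. Directedness is where
(††) enters: since `Y_λ ⟶ colim Y` is mono, two representatives with comparable indices are
automatically compatible, so an upper bound of indices of fewer than `α` representatives is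
an upper bound of the representatives themselves. -/

section CardinalDirected

variable {α : Cardinal.{v}} {I : Type v} [Preorder I]

theorem IsCardinalDirected.nonempty (h : IsCardinalDirected α I) (hα : 0 < α) : Nonempty I :=
  let ⟨b, _⟩ := h ∅ (by simpa using hα)
  ⟨b⟩

theorem IsCardinalDirected.isDirectedOrder (h : IsCardinalDirected α I)
    (hα : Cardinal.aleph0 ≤ α) : IsDirectedOrder I where
  directed a b := by
    obtain ⟨c, hc⟩ := h {a, b}
      (((Set.finite_singleton b).insert a).lt_aleph0.trans_le hα)
    exact ⟨c, hc a (by simp), hc b (by simp)⟩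

end CardinalDirected

section Lazard

variable {C : Type u} [Category.{v} C] {I Λ : Type v} [Preorder I] [Preorder Λ]
  (X : I ⥤ C) (Y : Λ ⥤ C) [HasColimit X] [HasColimit Y] (f : colimit X ⟶ colimit Y)

structure LazardIndex : Type v where
  i : I
  l : Λ
  g : X.obj i ⟶ Y.obj l
  w : g ≫ colimit.ι Y l = colimit.ι X i ≫ f

namespace LazardIndex

variable {X Y f}

instance : Preorder (LazardIndex X Y f) where
  le a b := ∃ (hi : a.i ≤ b.i) (hl : a.l ≤ b.l),
    X.map (homOfLE hi) ≫ b.g = a.g ≫ Y.map (homOfLE hl)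
  le_refl a := ⟨le_rfl, le_rfl, by simp [homOfLE_refl]⟩
  le_trans a b c := by
    rintro ⟨hi, hl, hab⟩ ⟨hi', hl', hbc⟩
    refine ⟨hi.trans hi', hl.trans hl', ?_⟩
    rw [← homOfLE_comp hi hi', ← homOfLE_comp hl hl', Functor.map_comp, Functor.map_comp,
      Category.assoc, hbc, reassoc_of% hab]

theorem monotone_i : Monotone (i : LazardIndex X Y f → I) := fun _ _ h => h.fst

theorem monotone_l : Monotone (l : LazardIndex X Y f → Λ) := fun _ _ h => h.snd.fst

theorem le_of_le_of_le {a b : LazardIndex X Y f} (hi : a.i ≤ b.i) (hl : a.l ≤ b.l)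
    [Mono (colimit.ι Y b.l)] : a ≤ b := by
  refine ⟨hi, hl, ?_⟩
  rw [← cancel_mono (colimit.ι Y b.l), Category.assoc, Category.assoc, b.w, colimit.w,
    colimit.w_assoc, a.w]

variable (X Y f) in
def system : LazardIndex X Y f ⥤ Arrow C where
  obj ω := Arrow.mk ω.g
  map φ := Arrow.homMk (X.map (homOfLE (monotone_i (leOfHom φ))))
    (Y.map (homOfLE (monotone_l (leOfHom φ)))) (leOfHom φ).snd.snd
  map_id _ := by ext <;> simp [homOfLE_refl]
  map_comp _ _ := by ext <;> simp [← Functor.map_comp, homOfLE_comp]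

def mapL (ω : LazardIndex X Y f) {l : Λ} (h : ω.l ≤ l) : LazardIndex X Y f where
  i := ω.i
  l := l
  g := ω.g ≫ Y.map (homOfLE h)
  w := by rw [Category.assoc, colimit.w, ω.w]

theorem i_surjective
    (hfact : ∀ j : I, ∃ (μ : Λ) (g : X.obj j ⟶ Y.obj μ),
      g ≫ colimit.ι Y μ = colimit.ι X j ≫ f) :
    Function.Surjective (i : LazardIndex X Y f → I) := fun j =>
  let ⟨μ, g, w⟩ := hfact j
  ⟨⟨j, μ, g, w⟩, rfl⟩

theorem isCardinalDirected {α : Cardinal.{v}} (hα : Cardinal.aleph0 ≤ α)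
    (hI : IsCardinalDirected α I) (hΛ : IsCardinalDirected α Λ)
    (hsurj : Function.Surjective (i : LazardIndex X Y f → I))
    (hmono : ∀ μ : Λ, Mono (colimit.ι Y μ)) : IsCardinalDirected α (LazardIndex X Y f) := by
  intro S hS
  have := hΛ.isDirectedOrder hα
  obtain ⟨i₀, hi₀⟩ := hI (i '' S) (Cardinal.mk_image_le.trans_lt hS)
  obtain ⟨l₀, hl₀⟩ := hΛ (l '' S) (Cardinal.mk_image_le.trans_lt hS)
  obtain ⟨ω, rfl⟩ := hsurj i₀
  obtain ⟨l₁, hl₀₁, hωl₁⟩ := exists_ge_ge l₀ ω.l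
  refine ⟨ω.mapL hωl₁, fun s hs => ?_⟩
  exact le_of_le_of_le (hi₀ _ ⟨s, hs, rfl⟩) ((hl₀ _ ⟨s, hs, rfl⟩).trans hl₀₁)

theorem final_i [IsDirectedOrder (LazardIndex X Y f)]
    (hsurj : Function.Surjective (i : LazardIndex X Y f → I)) :
    (monotone_i (X := X) (Y := Y) (f := f)).functor.Final :=
  monotone_i.final_functor_iff.mpr fun j => (hsurj j).imp fun _ h => h.ge

theorem final_l [IsDirectedOrder (LazardIndex X Y f)] [IsDirectedOrder Λ]
    [Nonempty (LazardIndex X Y f)] : (monotone_l (X := X) (Y := Y) (f := f)).functor.Final :=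
  monotone_l.final_functor_iff.mpr fun μ => by
    obtain ⟨ω⟩ := ‹Nonempty (LazardIndex X Y f)›
    obtain ⟨l₁, hμ, hω⟩ := exists_ge_ge μ ω.l
    exact ⟨ω.mapL hω, hμ⟩

theorem desc_eq (hL : IsColimit ((colimit.cocone X).whisker (monotone_i (f := f)).functor)) :
    hL.desc ((Cocone.precompose (Functor.whiskerLeft (system X Y f) (arrowHomNatTrans C))).obj
      ((colimit.cocone Y).whisker (monotone_l (f := f)).functor)) = f :=
  hL.hom_ext fun ω => (hL.fac _ ω).trans ω.w

end LazardIndex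

end Lazard

theorem generalized_lazard_trick_general {C : Type u} [Category.{v} C]
    (α : Cardinal.{v}) (hα : α.IsRegular)
    {I Λ : Type v} [Preorder I] [Preorder Λ]
    (hI : IsCardinalDirected α I) (hΛ : IsCardinalDirected α Λ)
    (X : I ⥤ C) (Y : Λ ⥤ C) [HasColimit X] [HasColimit Y]
    (f : colimit X ⟶ colimit Y)
    (hfact : ∀ j : I, ∃ (μ : Λ) (g : X.obj j ⟶ Y.obj μ),
      g ≫ colimit.ι Y μ = colimit.ι X j ≫ f)
    (hmono : ∀ μ : Λ, Mono (colimit.ι Y μ)) :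
    ∃ S : CardinalDirectedArrowSystem α C,
      (∀ ω : S.Ω, (∃ i : I, (S.D.obj ω).left = X.obj i) ∧
        (∃ l : Λ, (S.D.obj ω).right = Y.obj l)) ∧
      ∃ (cL : Cocone (S.D ⋙ Arrow.leftFunc)) (hL : IsColimit cL)
        (cR : Cocone (S.D ⋙ Arrow.rightFunc)) (_ : IsColimit cR)
        (eL : cL.pt ≅ colimit X) (eR : cR.pt ≅ colimit Y),
        hL.desc ((Cocone.precompose (Functor.whiskerLeft S.D (arrowHomNatTrans C))).obj cR) ≫
            eR.hom = eL.hom ≫ f := by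
  have hsurj := LazardIndex.i_surjective hfact
  have hdir := LazardIndex.isCardinalDirected hα.aleph0_le hI hΛ hsurj hmono
  have := hΛ.isDirectedOrder hα.aleph0_le
  have := hdir.isDirectedOrder hα.aleph0_le
  have : Nonempty (LazardIndex X Y f) := (hI.nonempty hα.pos).map fun j => (hsurj j).choose
  have := LazardIndex.final_i hsurj
  have := LazardIndex.final_l (X := X) (Y := Y) (f := f)
  let hL := (Functor.Final.isColimitWhiskerEquiv (LazardIndex.monotone_i (f := f)).functor _).symm
    (colimit.isColimit X)
  refine ⟨⟨LazardIndex X Y f, hdir, LazardIndex.system X Y f⟩,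
    fun ω => ⟨⟨ω.i, rfl⟩, ⟨ω.l, rfl⟩⟩, _, hL, _,
    (Functor.Final.isColimitWhiskerEquiv (LazardIndex.monotone_l (f := f)).functor _).symm
      (colimit.isColimit Y), Iso.refl _, Iso.refl _,
    ?_⟩
  exact (Category.comp_id _).trans ((LazardIndex.desc_eq hL).trans (Category.id_comp f).symm)

/-- Generalized Lazard's Trick: let `𝒜` be an additive category with
coproducts, `X : I ⥤ 𝒜` and `Y : Λ ⥤ 𝒜` two direct systems admitting colimits, with `I`
and `Λ` `α`-directed for a regular cardinal `α`, and let `f : colim X ⟶ colim Y` be a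
morphism such that (†) for each `j` the composite `colimit.ι X j ≫ f` factors through
some `colimit.ι Y μ`, and (††) each `colimit.ι Y μ` is a monomorphism.  Then there is an
`α`-directed system of morphisms `(g_ω : X_ω ⟶ Y_ω)` such that (a) each `X_ω` is one of
the `X.obj i` and each `Y_ω` is one of the `Y.obj λ`, and (b) the colimit of the system
of morphisms exists and `colim g_ω` is isomorphic to `f` in the arrow category. -/
theorem generalized_lazard_trick {C : Type u} [Category.{v} C] [Preadditive C]
    [HasCoproducts.{v} C] (α : Cardinal.{v}) (hα : α.IsRegular)
    {I Λ : Type v} [Preorder I] [Preorder Λ]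
    (hI : IsCardinalDirected α I) (hΛ : IsCardinalDirected α Λ)
    (X : I ⥤ C) (Y : Λ ⥤ C) [HasColimit X] [HasColimit Y]
    (f : colimit X ⟶ colimit Y)
    (hfact : ∀ j : I, ∃ (μ : Λ) (g : X.obj j ⟶ Y.obj μ),
      g ≫ colimit.ι Y μ = colimit.ι X j ≫ f)
    (hmono : ∀ μ : Λ, Mono (colimit.ι Y μ)) :
    ∃ S : CardinalDirectedArrowSystem α C,
      (∀ ω : S.Ω, (∃ i : I, (S.D.obj ω).left = X.obj i) ∧
        (∃ l : Λ, (S.D.obj ω).right = Y.obj l)) ∧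
      ∃ (cL : Cocone (S.D ⋙ Arrow.leftFunc)) (hL : IsColimit cL)
        (cR : Cocone (S.D ⋙ Arrow.rightFunc)) (_ : IsColimit cR)
        (eL : cL.pt ≅ colimit X) (eR : cR.pt ≅ colimit Y),
        hL.desc ((Cocone.precompose (Functor.whiskerLeft S.D (arrowHomNatTrans C))).obj cR) ≫
            eR.hom = eL.hom ≫ f :=
  generalized_lazard_trick_general α hα hI hΛ X Y f hfact hmono
end

section
/- Let α be a regular cardinal, let 𝒜 be a cocomplete abelian category, and let T be an object of 𝒜 admitting an exact sequence P₂ ⟶ P₁ ⟶ P₀ ⟶ T ⟶ 0 in which P₀, P₁ and P₂ are projective and α-presentable. Then the class {Y ∈ 𝒜 : Hom_𝒜(T,Y) = 0 and Ext¹_𝒜(T,Y) = 0} is closed under α-directed colimits: if (Y_i)_{i∈I} is an α-directed system with Hom_𝒜(T,Y_i) = 0 = Ext¹_𝒜(T,Y_i) for all i ∈ I, then Hom_𝒜(T, colim Y_i) = 0 = Ext¹_𝒜(T, colim Y_i). -/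
open CategoryTheory CategoryTheory.Limits Opposite

universe v u

/-- An object `X` is `α`-presentable when, for every `α`-directed system `Y` admitting a
colimit, the canonical comparison map
`colim Hom(X, Y i) ⟶ Hom(X, colim Y)` is an isomorphism. -/
def IsAlphaPresentable (α : Cardinal.{v}) {C : Type u} [Category.{v} C] (X : C) : Prop :=
  ∀ (I : Type v) [Preorder I], IsCardinalDirected α I →
    ∀ (Y : I ⥤ C) [HasColimit Y],
      IsIso (colimit.post Y (coyoneda.obj (op X)))

/-!
Write `K ⟶ P₀` for the kernel of `p`. Since `P₀` is projective, `Ext¹(T, Y) = 0` says exactly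
that every morphism `K ⟶ Y` extends to `P₀`. As `P₂ ⟶ P₁ ⟶ K ⟶ 0` is a presentation of `K` by
`α`-presentable objects, every morphism from `K` (and likewise from `T`) to `colim Y` factors
through some `Y j`. Hence a morphism `T ⟶ colim Y` factors through `Hom(T, Y j) = 0`, and a
morphism `K ⟶ colim Y` factors through some `Y j`, where it extends to `P₀`.
-/

section Presentable

variable {α : Cardinal.{v}}

lemma IsCardinalDirected.isFiltered {I : Type v} [Preorder I]
    (hα : Cardinal.aleph0 ≤ α) (hI : IsCardinalDirected α I) : IsFiltered I := by
  have : Nonempty I := by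
    obtain ⟨b, -⟩ := hI ∅ (by simpa using Cardinal.aleph0_pos.trans_le hα)
    exact ⟨b⟩
  have : IsDirected I (· ≤ ·) := ⟨fun a b => by
    obtain ⟨c, hc⟩ := hI {a, b} (((Set.finite_singleton b).insert a).lt_aleph0.trans_le hα)
    exact ⟨c, hc a (by simp), hc b (by simp)⟩⟩
  infer_instance

variable {C : Type u} [Category.{v} C] {X : C}

lemma colimit.ι_post_coyoneda_apply {I : Type v} [Preorder I] (Y : I ⥤ C)
    [HasColimit Y] (i : I) (g : X ⟶ Y.obj i) :
    colimit.post Y (coyoneda.obj (op X)) (colimit.ι (Y ⋙ coyoneda.obj (op X)) i g) =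
      g ≫ colimit.ι Y i :=
  ConcreteCategory.congr_hom (colimit.ι_post Y (coyoneda.obj (op X)) i) g

lemma IsAlphaPresentable.exists_comp_ι_eq (hX : IsAlphaPresentable α X) {I : Type v}
    [Preorder I] (hI : IsCardinalDirected α I) (Y : I ⥤ C) [HasColimit Y]
    (f : X ⟶ colimit Y) : ∃ (i : I) (g : X ⟶ Y.obj i), g ≫ colimit.ι Y i = f := by
  obtain ⟨x, rfl⟩ := ((isIso_iff_bijective _).mp (hX I hI Y)).2 f
  obtain ⟨i, g, rfl⟩ := Types.jointly_surjective' x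
  exact ⟨i, g, (colimit.ι_post_coyoneda_apply Y i g).symm⟩

lemma IsAlphaPresentable.exists_map_eq_of_comp_ι_eq (hX : IsAlphaPresentable α X)
    (hα : Cardinal.aleph0 ≤ α) {I : Type v} [Preorder I] (hI : IsCardinalDirected α I)
    (Y : I ⥤ C) [HasColimit Y] {i : I} (g g' : X ⟶ Y.obj i)
    (h : g ≫ colimit.ι Y i = g' ≫ colimit.ι Y i) :
    ∃ (j : I) (hij : i ≤ j), g ≫ Y.map (homOfLE hij) = g' ≫ Y.map (homOfLE hij) := by
  have := hI.isFiltered hα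
  have heq : colimit.ι (Y ⋙ coyoneda.obj (op X)) i g =
      colimit.ι (Y ⋙ coyoneda.obj (op X)) i g' := by
    apply ((isIso_iff_bijective _).mp (hX I hI Y)).1
    rwa [colimit.ι_post_coyoneda_apply, colimit.ι_post_coyoneda_apply]
  obtain ⟨j, f, f', hj⟩ := (Types.FilteredColimit.colimit_eq_iff _).mp heq
  rw [Subsingleton.elim f' f] at hj
  exact ⟨j, leOfHom f, hj⟩

end Presentable

section Abelian

variable {A : Type u} [Category.{v} A] [Abelian A] {α : Cardinal.{v}}

lemma IsAlphaPresentable.exists_comp_ι_eq_of_comp_eq_zero {P Q : A}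
    (hP : IsAlphaPresentable α P) (hQ : IsAlphaPresentable α Q) (hα : Cardinal.aleph0 ≤ α)
    {I : Type v} [Preorder I] (hI : IsCardinalDirected α I) (Y : I ⥤ A) [HasColimit Y]
    (g : Q ⟶ P) (f : P ⟶ colimit Y) (hgf : g ≫ f = 0) :
    ∃ (j : I) (f' : P ⟶ Y.obj j), f' ≫ colimit.ι Y j = f ∧ g ≫ f' = 0 := by
  obtain ⟨i, f', rfl⟩ := hP.exists_comp_ι_eq hI Y f
  obtain ⟨j, hij, hj⟩ := hQ.exists_map_eq_of_comp_ι_eq hα hI Y (g ≫ f') 0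
    (by rw [Category.assoc, hgf, zero_comp])
  refine ⟨j, f' ≫ Y.map (homOfLE hij), by rw [Category.assoc, colimit.w], ?_⟩
  rw [← Category.assoc, hj, zero_comp]

namespace CategoryTheory.ShortComplex

lemma Exact.exists_comp_ι_eq_of_isAlphaPresentable {S : ShortComplex A}
    (hS : S.Exact) [Epi S.g] (h₁ : IsAlphaPresentable α S.X₁)
    (h₂ : IsAlphaPresentable α S.X₂) (hα : Cardinal.aleph0 ≤ α) {I : Type v} [Preorder I]
    (hI : IsCardinalDirected α I) (Y : I ⥤ A) [HasColimit Y] (f : S.X₃ ⟶ colimit Y) :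
    ∃ (j : I) (f' : S.X₃ ⟶ Y.obj j), f' ≫ colimit.ι Y j = f := by
  obtain ⟨j, f', hf', hf'0⟩ :=
    h₂.exists_comp_ι_eq_of_comp_eq_zero h₁ hα hI Y S.f (S.g ≫ f) (by simp)
  refine ⟨j, hS.desc f' hf'0, ?_⟩
  rw [← cancel_epi S.g, hS.g_desc_assoc, hf']

lemma ShortExact.exists_comp_eq_of_ext1Vanishes {S : ShortComplex A}
    (hS : S.ShortExact) {Y : A} (hY : Ext1Vanishes S.X₃ Y) (u : S.X₁ ⟶ Y) :
    ∃ c : S.X₂ ⟶ Y, S.f ≫ c = u := by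
  -- The pushout of `S` along `u` is an extension of `S.X₃` by `Y`; it splits, and its
  -- retraction onto `Y` restricts on `S.X₂` to the required extension of `u`.
  have := hS.mono_f
  have := hS.epi_g
  let q : pushout S.f u ⟶ S.X₃ := pushout.desc S.g 0 (by simp)
  have hlq : pushout.inl S.f u ≫ q = S.g := pushout.inl_desc _ _ _
  have hrq : pushout.inr S.f u ≫ q = 0 := pushout.inr_desc _ _ _
  have hq : Epi q := epi_of_epi_fac hlq
  have hexact : (ShortComplex.mk _ _ hrq).Exact := by
    rw [ShortComplex.exact_iff_exact_up_to_refinements]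
    intro Z z (hz : z ≫ q = 0)
    obtain ⟨Z₁, π₁, _, x₂, x₃, hx⟩ :=
      (IsPushout.of_hasPushout S.f u).hom_eq_add_up_to_refinements z
    obtain ⟨Z₂, π₂, _, k, hk⟩ := hS.exact.exact_up_to_refinements x₂ (by
      simpa [hz, hlq, hrq] using (hx =≫ q).symm)
    refine ⟨Z₂, π₂ ≫ π₁, epi_comp _ _, π₂ ≫ x₃ + k ≫ u, ?_⟩
    have hk' : π₂ ≫ x₂ = k ≫ S.f := hk
    simp only [Category.assoc, hx, Preadditive.comp_add, reassoc_of% hk', pushout.condition,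
      Preadditive.add_comp]
    exact add_comm _ _
  obtain ⟨s, hs⟩ := hY _ _ _ hrq (ShortComplex.ShortExact.mk' hexact inferInstance hq)
  let σ := ShortComplex.Splitting.ofExactOfSection _ hexact s hs inferInstance
  refine ⟨pushout.inl S.f u ≫ σ.r, ?_⟩
  rw [pushout.condition_assoc]
  simpa using u ≫= σ.f_r

lemma Exact.ext1Vanishes_of_forall_exists_comp_eq {S : ShortComplex A}
    (hS : S.Exact) [Epi S.g] [Projective S.X₂] {X : A}
    (hX : ∀ u : S.X₁ ⟶ X, ∃ c : S.X₂ ⟶ X, S.f ≫ c = u) : Ext1Vanishes S.X₃ X := by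
  intro E e q w he
  have := he.epi_g
  let a : S.X₂ ⟶ E := Projective.factorThru S.g q
  have ha : a ≫ q = S.g := Projective.factorThru_comp S.g q
  have := he.mono_f
  obtain ⟨c, hc⟩ := hX (he.exact.lift (S.f ≫ a) (by simp [ha]))
  have hac : S.f ≫ (a - c ≫ e) = 0 := by
    rw [Preadditive.comp_sub, ← Category.assoc, hc]
    exact sub_eq_zero.mpr (he.exact.lift_f _ _).symm
  refine ⟨hS.desc _ hac, ?_⟩
  rw [← cancel_epi S.g, hS.g_desc_assoc, Preadditive.sub_comp, ha, Category.assoc, w, comp_zero,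
    sub_zero, Category.comp_id]

lemma exact_toCycles_of_exact {S : ShortComplex A} {P : A} {g : P ⟶ S.X₁}
    (w : g ≫ S.f = 0) (hg : (mk g S.f w).Exact) :
    (mk g S.toCycles (by simp [← cancel_mono S.iCycles, w])).Exact :=
  (exact_iff_of_epi_of_isIso_of_mono (S₁ := mk g S.toCycles _) (S₂ := mk g S.f w)
    { τ₁ := 𝟙 _, τ₂ := 𝟙 _, τ₃ := S.iCycles }).2 hg

end CategoryTheory.ShortComplex

end Abelian

theorem perp01_closed_under_cardinalDirected_colimits_general
    {A : Type u} [Category.{v} A] [Abelian A] [HasColimits A]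
    (α : Cardinal.{v}) (hα : α.IsRegular)
    (T P₀ P₁ P₂ : A) (g₂ : P₂ ⟶ P₁) (g₁ : P₁ ⟶ P₀) (p : P₀ ⟶ T)
    [Projective P₀]
    (h₀ : IsAlphaPresentable α P₀) (h₁ : IsAlphaPresentable α P₁)
    (h₂ : IsAlphaPresentable α P₂)
    (hepi : Epi p)
    (w₁ : g₁ ≫ p = 0) (w₂ : g₂ ≫ g₁ = 0)
    (hex₁ : (ShortComplex.mk g₁ p w₁).Exact) (hex₂ : (ShortComplex.mk g₂ g₁ w₂).Exact)
    (I : Type v) [Preorder I] (hI : IsCardinalDirected α I) (Y : I ⥤ A)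
    (hvan : ∀ i : I, (∀ h : T ⟶ Y.obj i, h = 0) ∧ Ext1Vanishes T (Y.obj i)) :
    (∀ h : T ⟶ colimit Y, h = 0) ∧ Ext1Vanishes T (colimit Y) := by
  let S := ShortComplex.mk g₁ p w₁
  have hK : (ShortComplex.mk S.iCycles p S.iCycles_g).ShortExact :=
    { exact := ShortComplex.exact_of_f_is_kernel _ S.cyclesIsKernel }
  have hKpres := ShortComplex.exact_toCycles_of_exact (S := S) w₂ hex₂
  have : Epi S.toCycles := hex₁.epi_toCycles
  refine ⟨fun h => ?_, hK.exact.ext1Vanishes_of_forall_exists_comp_eq fun v => ?_⟩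
  · obtain ⟨j, h', rfl⟩ :=
      hex₁.exists_comp_ι_eq_of_isAlphaPresentable h₁ h₀ hα.aleph0_le hI Y h
    rw [(hvan j).1 h', zero_comp]
  · obtain ⟨j, u, rfl⟩ :=
      hKpres.exists_comp_ι_eq_of_isAlphaPresentable h₂ h₁ hα.aleph0_le hI Y v
    obtain ⟨c, hc⟩ := hK.exists_comp_eq_of_ext1Vanishes (hvan j).2 u
    exact ⟨c ≫ colimit.ι Y j, by rw [← Category.assoc, hc]⟩

/-- let `α` be a regular cardinal, `𝒜` a cocomplete abelian category, and
`T` an object with an exact sequence `P₂ ⟶ P₁ ⟶ P₀ ⟶ T ⟶ 0` where `P₀, P₁, P₂` are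
projective and `α`-presentable.  Then the class
`{Y | Hom(T, Y) = 0 and Ext¹(T, Y) = 0}` is closed under `α`-directed colimits. -/
theorem perp01_closed_under_cardinalDirected_colimits
    {A : Type u} [Category.{v} A] [Abelian A] [HasColimits A]
    (α : Cardinal.{v}) (hα : α.IsRegular)
    (T P₀ P₁ P₂ : A) (g₂ : P₂ ⟶ P₁) (g₁ : P₁ ⟶ P₀) (p : P₀ ⟶ T)
    [Projective P₀] [Projective P₁] [Projective P₂]
    (h₀ : IsAlphaPresentable α P₀) (h₁ : IsAlphaPresentable α P₁)
    (h₂ : IsAlphaPresentable α P₂)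
    (hepi : Epi p)
    (w₁ : g₁ ≫ p = 0) (w₂ : g₂ ≫ g₁ = 0)
    (hex₁ : (ShortComplex.mk g₁ p w₁).Exact) (hex₂ : (ShortComplex.mk g₂ g₁ w₂).Exact)
    (I : Type v) [Preorder I] (hI : IsCardinalDirected α I) (Y : I ⥤ A)
    (hvan : ∀ i : I, (∀ h : T ⟶ Y.obj i, h = 0) ∧ Ext1Vanishes T (Y.obj i)) :
    (∀ h : T ⟶ colimit Y, h = 0) ∧ Ext1Vanishes T (colimit Y) :=
  perp01_closed_under_cardinalDirected_colimits_general α hα T P₀ P₁ P₂ g₂ g₁ p h₀ h₁ h₂ hepi w₁ w₂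
    hex₁ hex₂ I hI Y hvan
end
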